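/- arXiv:0911.5702 — 4 statements merged into one kernel-verified Lean document; each statement's English description precedes it below -/
import Mathlib

section
/- For any real p > 2 and all real numbers x, y: | x·|x|^{p−2} − y·|y|^{p−2} | ≤ max{1, (p−1)/2} · |x − y| · ( |x|^{p−2} + |y|^{p−2} ). -/
/-!
Write `q = p - 2`. Since `t ↦ t |t|^q` is odd we may take `x ≥ 0`. If `y < 0` the left side is
`x^(q+1) + |y|^(q+1)`, at most `(x + |y|) (x^q + |y|^q)`. If `0 ≤ y ≤ x`, the bound with
constant `1` for `q ≤ 1` amounts to `y x^q ≤ x y^q`, i.e. to `t ↦ t^(1-q)` being monotone; for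
`q ≥ 1` it is the trapezoid bound for the convex function `(q+1) t^q`, whose integral over `[y, x]`
is `x^(q+1) - y^(q+1)`.
-/

open Set

namespace Real

variable {q a b : ℝ}

lemma rpow_sub_rpow_le_mul_rpow_sub_one (hq : 1 ≤ q) (hb : 0 ≤ b) (hba : b ≤ a) :
    a ^ q - b ^ q ≤ q * a ^ (q - 1) * (a - b) := by
  rcases hba.eq_or_lt with rfl | hlt
  · simp
  have hslope := (convexOn_rpow hq).slope_le_of_hasDerivAt (x := b) (y := a) hb
    (hb.trans hlt.le) hlt (hasDerivAt_rpow_const (Or.inr hq))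
  rwa [slope_def_field, div_le_iff₀ (sub_pos.2 hlt)] at hslope

lemma rpow_add_one_sub_le_of_le_one (hq₀ : 0 ≤ q) (hq₁ : q ≤ 1) (hb : 0 ≤ b) (hba : b ≤ a) :
    a ^ (q + 1) - b ^ (q + 1) ≤ (a - b) * (a ^ q + b ^ q) := by
  have ha : 0 ≤ a := hb.trans hba
  have split : ∀ t : ℝ, 0 ≤ t → t = t ^ (1 - q) * t ^ q := fun t ht => by
    rw [← rpow_add' ht (by norm_num), sub_add_cancel, rpow_one]
  have key : b * a ^ q ≤ a * b ^ q :=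
    calc b * a ^ q = b ^ (1 - q) * b ^ q * a ^ q := by rw [← split b hb]
      _ ≤ a ^ (1 - q) * b ^ q * a ^ q := by gcongr
      _ = a * b ^ q := by rw [mul_right_comm, ← split a ha]
  rw [rpow_add_one' ha (by linarith), rpow_add_one' hb (by linarith)]
  linarith

lemma rpow_add_one_sub_le_trapezoid (hq : 1 ≤ q) (hb : 0 ≤ b) (hba : b ≤ a) :
    a ^ (q + 1) - b ^ (q + 1) ≤ (q + 1) / 2 * (a - b) * (a ^ q + b ^ q) := by
  set g : ℝ → ℝ := fun t => (q + 1) / 2 * (t - b) * (t ^ q + b ^ q) - t ^ (q + 1)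
  set g' : ℝ → ℝ := fun t =>
    (q + 1) / 2 * (t ^ q + b ^ q) + (q + 1) / 2 * (t - b) * (q * t ^ (q - 1)) - (q + 1) * t ^ q
  have hg : ∀ t, HasDerivAt g (g' t) t := fun t => by
    have h := ((((hasDerivAt_id t).sub_const b).const_mul ((q + 1) / 2)).mul
      ((hasDerivAt_rpow_const (Or.inr hq)).add_const (b ^ q))).sub
      (hasDerivAt_rpow_const (x := t) (p := q + 1) (Or.inr (by linarith)))
    refine h.congr_deriv ?_
    simp only [g', add_sub_cancel_right, id, mul_one]
  have hg'_nonneg : ∀ t ∈ interior (Ici b), 0 ≤ g' t := fun t ht => by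
    rw [interior_Ici] at ht
    have tangent := rpow_sub_rpow_le_mul_rpow_sub_one hq hb (le_of_lt ht)
    have hq₁ : 0 ≤ (q + 1) / 2 := by linarith
    have : g' t = (q + 1) / 2 * (q * t ^ (q - 1) * (t - b) - (t ^ q - b ^ q)) := by
      simp only [g']; ring
    rw [this]
    exact mul_nonneg hq₁ (sub_nonneg.2 tangent)
  have hmono : MonotoneOn g (Ici b) :=
    monotoneOn_of_hasDerivWithinAt_nonneg (convex_Ici b)
      (fun t _ => (hg t).continuousAt.continuousWithinAt)
      (fun t _ => (hg t).hasDerivWithinAt) hg'_nonneg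
  have := hmono self_mem_Ici hba hba
  simp only [g, sub_self, zero_mul, mul_zero, zero_sub] at this
  linarith

lemma abs_rpow_add_one_sub_le (hq : 0 ≤ q) (ha : 0 ≤ a) (hb : 0 ≤ b) :
    |a ^ (q + 1) - b ^ (q + 1)| ≤ max 1 ((q + 1) / 2) * |a - b| * (a ^ q + b ^ q) := by
  wlog hba : b ≤ a generalizing a b
  · rw [abs_sub_comm, abs_sub_comm a, add_comm (a ^ q)]
    exact this hb ha (le_of_not_ge hba)
  rw [abs_of_nonneg (sub_nonneg.2 (rpow_le_rpow hb hba (by linarith))),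
    abs_of_nonneg (sub_nonneg.2 hba)]
  have hsum : 0 ≤ (a - b) * (a ^ q + b ^ q) :=
    mul_nonneg (sub_nonneg.2 hba) (by positivity)
  rcases le_total q 1 with hq₁ | hq₁
  · calc a ^ (q + 1) - b ^ (q + 1) ≤ (a - b) * (a ^ q + b ^ q) :=
          rpow_add_one_sub_le_of_le_one hq hq₁ hb hba
      _ ≤ max 1 ((q + 1) / 2) * ((a - b) * (a ^ q + b ^ q)) :=
          le_mul_of_one_le_left hsum (le_max_left _ _)
      _ = _ := by ring
  · calc a ^ (q + 1) - b ^ (q + 1) ≤ (q + 1) / 2 * (a - b) * (a ^ q + b ^ q) :=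
          rpow_add_one_sub_le_trapezoid hq₁ hb hba
      _ ≤ max 1 ((q + 1) / 2) * (a - b) * (a ^ q + b ^ q) := by
          rw [mul_assoc, mul_assoc]
          exact mul_le_mul_of_nonneg_right (le_max_right _ _) hsum

lemma rpow_add_one_add_rpow_add_one_le (hq : 0 ≤ q) (ha : 0 ≤ a) (hb : 0 ≤ b) :
    a ^ (q + 1) + b ^ (q + 1) ≤ (a + b) * (a ^ q + b ^ q) := by
  rw [rpow_add_one' ha (by linarith), rpow_add_one' hb (by linarith)]
  nlinarith [mul_nonneg ha (rpow_nonneg hb q), mul_nonneg hb (rpow_nonneg ha q)]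

end Real

open Real

lemma abs_mul_abs_rpow_sub_le_of_nonneg {q x : ℝ} (hq : 0 ≤ q) (hx : 0 ≤ x) (y : ℝ) :
    |x * |x| ^ q - y * |y| ^ q| ≤ max 1 ((q + 1) / 2) * |x - y| * (|x| ^ q + |y| ^ q) := by
  have signed_pow : ∀ t : ℝ, 0 ≤ t → t * t ^ q = t ^ (q + 1) := fun t ht => by
    rw [rpow_add_one' ht (by linarith), mul_comm]
  rw [abs_of_nonneg hx]
  rcases le_total 0 y with hy | hy
  · rw [abs_of_nonneg hy, signed_pow x hx, signed_pow y hy]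
    exact abs_rpow_add_one_sub_le hq hx hy
  · have hy' : 0 ≤ -y := neg_nonneg.2 hy
    have hopp : x * x ^ q - y * (-y) ^ q = x ^ (q + 1) + (-y) ^ (q + 1) := by
      rw [← signed_pow x hx, ← signed_pow (-y) hy']; ring
    rw [abs_of_nonpos hy, abs_of_nonneg (by linarith : 0 ≤ x - y)]
    calc |x * x ^ q - y * (-y) ^ q| = x ^ (q + 1) + (-y) ^ (q + 1) := by
          rw [hopp, abs_of_nonneg (by positivity)]
      _ ≤ (x - y) * (x ^ q + (-y) ^ q) := by
          rw [sub_eq_add_neg]; exact rpow_add_one_add_rpow_add_one_le hq hx hy'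
      _ ≤ max 1 ((q + 1) / 2) * ((x - y) * (x ^ q + (-y) ^ q)) :=
          le_mul_of_one_le_left (mul_nonneg (by linarith) (by positivity)) (le_max_left _ _)
      _ = _ := by ring

lemma abs_mul_abs_rpow_sub_le {q : ℝ} (hq : 0 ≤ q) (x y : ℝ) :
    |x * |x| ^ q - y * |y| ^ q| ≤ max 1 ((q + 1) / 2) * |x - y| * (|x| ^ q + |y| ^ q) := by
  rcases le_total 0 x with hx | hx
  · exact abs_mul_abs_rpow_sub_le_of_nonneg hq hx y
  · have h := abs_mul_abs_rpow_sub_le_of_nonneg hq (neg_nonneg.2 hx) (-y)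
    have odd : |-x * |x| ^ q - -y * |y| ^ q| = |x * |x| ^ q - y * |y| ^ q| := by
      rw [← abs_neg]; congr 1; ring
    rwa [abs_neg, abs_neg, odd, abs_sub_comm (-x), neg_sub_neg] at h

/-- **A technical inequality** (Lemma 5.4). For `p > 2` and all reals `x, y`,
`|x|x|^{p-2} - y|y|^{p-2}| ≤ max{1, (p-1)/2} · |x-y| · (|x|^{p-2} + |y|^{p-2})`. -/
theorem stmt12 (p : ℝ) (hp : 2 < p) (x y : ℝ) :
    |x * |x| ^ (p - 2) - y * |y| ^ (p - 2)| ≤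
      max 1 ((p - 1) / 2) * |x - y| * (|x| ^ (p - 2) + |y| ^ (p - 2)) := by
  have h := abs_mul_abs_rpow_sub_le (q := p - 2) (by linarith) x y
  rwa [show p - 2 + 1 = p - 1 by ring] at h
end

section
/- Let β > 1 and a, b ≥ 0 be real numbers. If y ≥ 0 satisfies y^β ≤ a + b·y, then y^{β−1} ≤ a^{(β−1)/β} + b. -/
/-! Put `c = a^{(β-1)/β}`. If `y ≤ a^{1/β}`, then `y^{β-1} ≤ (a^{1/β})^{β-1} = c` by monotonicity.
Otherwise `a = a^{1/β} c ≤ y c`, so `y · y^{β-1} = y^β ≤ a + b y ≤ y (c + b)`, and we divide by `y > 0`. -/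

namespace Real

lemma rpow_one_div_mul_rpow_sub_one_div {a β : ℝ} (ha : 0 ≤ a) (hβ : β ≠ 0) :
    a ^ (1 / β) * a ^ ((β - 1) / β) = a := by
  have hsum : 1 / β + (β - 1) / β = 1 := by field_simp; ring
  rw [← rpow_add' ha (by rw [hsum]; exact one_ne_zero), hsum, rpow_one]

lemma rpow_one_div_rpow_sub_one {a β : ℝ} (ha : 0 ≤ a) :
    (a ^ (1 / β)) ^ (β - 1) = a ^ ((β - 1) / β) := by
  rw [← rpow_mul ha, one_div_mul_eq_div]

lemma rpow_sub_one_le_add_of_rpow_le {β a b c y : ℝ} (hy : 0 < y) (h : y ^ β ≤ a + b * y)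
    (hac : a ≤ y * c) : y ^ (β - 1) ≤ c + b := by
  rw [rpow_sub_one hy.ne', div_le_iff₀ hy]
  linarith

end Real

open Real in
/-- **A technical inequality** (Lemma 5.5). If `β > 1`, `a, b ≥ 0` and `y ≥ 0` satisfies
`y^β ≤ a + b y`, then `y^{β-1} ≤ a^{(β-1)/β} + b`. -/
theorem stmt13 (β a b y : ℝ) (hβ : 1 < β) (ha : 0 ≤ a) (hb : 0 ≤ b) (hy : 0 ≤ y)
    (h : y ^ β ≤ a + b * y) :
    y ^ (β - 1) ≤ a ^ ((β - 1) / β) + b := by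
  have hβ0 : β ≠ 0 := (zero_lt_one.trans hβ).ne'
  rcases le_or_gt y (a ^ (1 / β)) with hle | hgt
  · calc y ^ (β - 1) ≤ (a ^ (1 / β)) ^ (β - 1) := rpow_le_rpow hy hle (by linarith)
      _ = a ^ ((β - 1) / β) := rpow_one_div_rpow_sub_one ha
      _ ≤ a ^ ((β - 1) / β) + b := le_add_of_nonneg_right hb
  · refine rpow_sub_one_le_add_of_rpow_le ((rpow_nonneg ha _).trans_lt hgt) h ?_
    calc a = a ^ (1 / β) * a ^ ((β - 1) / β) := (rpow_one_div_mul_rpow_sub_one_div ha hβ0).symm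
      _ ≤ y * a ^ ((β - 1) / β) := by gcongr
end

section
/- Let Y, Y_1, …, Y_m be i.i.d. real random variables with mean zero and E[Y^{2q}] < ∞ for some integer q > 1, and let S_m = Y_1 + ⋯ + Y_m. Then there exist constants A_q and B_q depending only on q such that E[S_m^{2q}] ≤ A_q · m^q · (E[Y²])^q + B_q · m · E[Y^{2q}]. -/
open MeasureTheory ProbabilityTheory Finset
open scoped ENNReal

/-!
Expanding `S_m ^ (2q)` gives a sum over maps `g : Fin (2q) → Fin m`; by independence the term of
`g` is `∏ i, M (c i)`, where `M c = E[Y ^ c]` and `c i` is the number of times `g` takes the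
value `i`. Since `M 1 = 0`, only maps all of whose nonzero multiplicities are at least `2`
contribute, and such a map takes `k ≤ q` values. Lyapunov's interpolation
`|M c| ^ (2q - 2) ≤ M 2 ^ (2q - c) * M (2q) ^ (c - 2)` bounds its term by
`(m ^ q M 2 ^ q + m M (2q)) / m ^ k`, and at most `choose m k * k ^ (2q) ≤ m ^ k q ^ (2q)` maps
take exactly `k` values.
-/

theorem lintegral_pow_pow_le_pow_mul_pow {α : Type*} [MeasurableSpace α] {μ : Measure α}
    {f : α → ℝ≥0∞} (hf : AEMeasurable f μ) {a b c : ℕ} (hac : a ≤ c) (hcb : c ≤ b) :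
    (∫⁻ x, f x ^ c ∂μ) ^ (b - a) ≤ (∫⁻ x, f x ^ a ∂μ) ^ (b - c) * (∫⁻ x, f x ^ b ∂μ) ^ (c - a) := by
  rcases hac.eq_or_lt with rfl | hac'
  · simp
  -- Hölder with weights `θ = (b - c)/(b - a)` on `f ^ a` and `1 - θ` on `f ^ b`
  set θ : ℝ := (b - c : ℕ) / (b - a : ℕ)
  set θ' : ℝ := (c - a : ℕ) / (b - a : ℕ)
  have hba : ((b - a : ℕ) : ℝ) ≠ 0 := Nat.cast_ne_zero.mpr (by omega)
  have hθ : θ + θ' = 1 := by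
    rw [← add_div, div_eq_one_iff_eq hba]; norm_cast; omega
  have hholder := ENNReal.lintegral_mul_norm_pow_le (hf.pow_const a) (hf.pow_const b)
    (by positivity : 0 ≤ θ) (by positivity : 0 ≤ θ') hθ
  have hexp : ∀ x, (f x ^ a) ^ θ * (f x ^ b) ^ θ' = f x ^ c := by
    intro x
    simp only [← ENNReal.rpow_natCast, ← ENNReal.rpow_mul]
    rw [← ENNReal.rpow_add_of_nonneg _ _ (by positivity) (by positivity)]
    congr 1
    simp only [θ, θ']
    field_simp
    push_cast [Nat.cast_sub hac, Nat.cast_sub hcb, Nat.cast_sub (hac.trans hcb)]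
    ring
  simp only [hexp] at hholder
  calc (∫⁻ x, f x ^ c ∂μ) ^ (b - a)
      ≤ ((∫⁻ x, f x ^ a ∂μ) ^ θ * (∫⁻ x, f x ^ b ∂μ) ^ θ') ^ (b - a) := by gcongr
    _ = (∫⁻ x, f x ^ a ∂μ) ^ (b - c) * (∫⁻ x, f x ^ b ∂μ) ^ (c - a) := by
      rw [mul_pow]
      simp only [← ENNReal.rpow_natCast, ← ENNReal.rpow_mul, θ, θ']
      field_simp

theorem integral_abs_pow_eq_toReal {α : Type*} [MeasurableSpace α] {μ : Measure α} {f : α → ℝ}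
    (hf : AEStronglyMeasurable f μ) (k : ℕ) :
    ∫ x, |f x| ^ k ∂μ = (∫⁻ x, ‖f x‖ₑ ^ k ∂μ).toReal := by
  simpa [abs_pow, enorm_pow] using integral_norm_eq_lintegral_enorm (hf.pow k)

theorem integral_abs_pow_pow_le_pow_mul_pow {α : Type*} [MeasurableSpace α] {μ : Measure α}
    {f : α → ℝ} {a b c : ℕ} (hfa : Integrable (fun x ↦ |f x| ^ a) μ)
    (hfb : Integrable (fun x ↦ |f x| ^ b) μ)
    (hf : AEStronglyMeasurable f μ) (hac : a ≤ c) (hcb : c ≤ b) :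
    (∫ x, |f x| ^ c ∂μ) ^ (b - a) ≤
      (∫ x, |f x| ^ a ∂μ) ^ (b - c) * (∫ x, |f x| ^ b ∂μ) ^ (c - a) := by
  have hfin : ∀ k, Integrable (fun x ↦ |f x| ^ k) μ → ∫⁻ x, ‖f x‖ₑ ^ k ∂μ ≠ ⊤ := fun k hk ↦ by
    simpa [abs_pow, enorm_pow] using hk.2.ne
  simp only [integral_abs_pow_eq_toReal hf, ← ENNReal.toReal_pow, ← ENNReal.toReal_mul]
  exact ENNReal.toReal_mono (by finiteness [hfin a hfa, hfin b hfb])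
    (lintegral_pow_pow_le_pow_mul_pow hf.enorm hac hcb)

theorem integrable_abs_pow_of_le {μ : Measure ℝ} [IsFiniteMeasure μ] {n c : ℕ} (hn : Even n)
    (hc : c ≤ n) (h : Integrable (fun x ↦ x ^ n) μ) : Integrable (fun x ↦ |x| ^ c) μ := by
  refine ((integrable_const 1).add h).mono' (by fun_prop) (ae_of_all _ fun x ↦ ?_)
  rw [Real.norm_eq_abs, abs_of_nonneg (by positivity), Pi.add_apply, ← hn.pow_abs]
  rcases le_total |x| 1 with hx | hx
  · linarith [pow_le_one₀ (abs_nonneg x) hx (n := c), pow_nonneg (abs_nonneg x) n]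
  · linarith [pow_le_pow_right₀ hx hc]

theorem integrable_pow_of_le {μ : Measure ℝ} [IsFiniteMeasure μ] {n c : ℕ} (hn : Even n)
    (hc : c ≤ n) (h : Integrable (fun x ↦ x ^ n) μ) : Integrable (fun x ↦ x ^ c) μ :=
  (integrable_abs_pow_of_le hn hc h).mono' (by fun_prop)
    (ae_of_all _ fun x ↦ by rw [Real.norm_eq_abs, abs_pow])

theorem pow_card_mul_prod_le_add {ι : Type*} (s : Finset ι) (c : ι → ℕ) (z : ι → ℝ) {q : ℕ}
    {m x y : ℝ} (hq : 1 < q) (hc : ∀ i ∈ s, 2 ≤ c i) (hsum : ∑ i ∈ s, c i = 2 * q)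
    (hm : 0 ≤ m) (hx : 0 ≤ x) (hy : 0 ≤ y) (hz0 : ∀ i ∈ s, 0 ≤ z i)
    (hz : ∀ i ∈ s, z i ^ (2 * q - 2) ≤ x ^ (2 * q - c i) * y ^ (c i - 2)) :
    m ^ #s * ∏ i ∈ s, z i ≤ m ^ q * x ^ q + m * y := by
  set k := #s
  have hk : 2 * k ≤ 2 * q := by
    rw [← hsum, mul_comm, ← smul_eq_mul, ← sum_const]
    exact sum_le_sum hc
  have hk1 : 1 ≤ k := card_pos.mpr (nonempty_of_sum_ne_zero (f := c) (by omega))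
  have hcq : ∀ i ∈ s, c i ≤ 2 * q := fun i hi ↦ hsum ▸ single_le_sum (by simp) hi
  have hxexp : ∑ i ∈ s, (2 * q - c i) = q * (2 * (k - 1)) := by
    rw [sum_tsub_distrib _ hcq, hsum, sum_const, smul_eq_mul, ← Nat.sub_one_mul]
    ring
  have hyexp : ∑ i ∈ s, (c i - 2) = 2 * (q - k) := by
    rw [sum_tsub_distrib _ hc, hsum, sum_const, smul_eq_mul]
    omega
  have hmexp : k * (2 * q - 2) = q * (2 * (k - 1)) + 2 * (q - k) := by
    zify [hk1, (by omega : k ≤ q), (by omega : 2 ≤ 2 * q)]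
    ring
  set C := m ^ q * x ^ q + m * y
  -- raising to the power `2q - 2` turns the interpolation bounds into a product of powers
  -- of the two summands of `C`
  refine le_of_pow_le_pow_left₀ (by omega : 2 * q - 2 ≠ 0) (by positivity) ?_
  calc (m ^ k * ∏ i ∈ s, z i) ^ (2 * q - 2)
      = m ^ (k * (2 * q - 2)) * ∏ i ∈ s, z i ^ (2 * q - 2) := by
        rw [mul_pow, ← pow_mul, prod_pow]
    _ ≤ m ^ (k * (2 * q - 2)) * ∏ i ∈ s, (x ^ (2 * q - c i) * y ^ (c i - 2)) := by
        gcongr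
        · exact fun i hi ↦ pow_nonneg (hz0 i hi) _
        · exact hz _ ‹_›
    _ = (m ^ q * x ^ q) ^ (2 * (k - 1)) * (m * y) ^ (2 * (q - k)) := by
        rw [prod_mul_distrib, prod_pow_eq_pow_sum, prod_pow_eq_pow_sum, hxexp, hyexp, hmexp]
        ring
    _ ≤ C ^ (2 * (k - 1)) * C ^ (2 * (q - k)) := by
        gcongr
        · exact le_add_of_nonneg_right (by positivity)
        · exact le_add_of_nonneg_left (by positivity)
    _ = C ^ (2 * q - 2) := by rw [← pow_add]; congr 1; omega

theorem abs_integral_pow_pow_le_pow_mul_pow {μ : Measure ℝ} [IsFiniteMeasure μ] {n c : ℕ}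
    (hn : Even n) (h : Integrable (fun x ↦ x ^ n) μ) (h2c : 2 ≤ c) (hcn : c ≤ n) :
    |∫ x, x ^ c ∂μ| ^ (n - 2) ≤ (∫ x, x ^ 2 ∂μ) ^ (n - c) * (∫ x, x ^ n ∂μ) ^ (c - 2) := by
  have hinterp := integral_abs_pow_pow_le_pow_mul_pow (f := id)
    (integrable_abs_pow_of_le hn (h2c.trans hcn) h) (integrable_abs_pow_of_le hn le_rfl h)
    aestronglyMeasurable_id h2c hcn
  simp only [id, sq_abs, hn.pow_abs] at hinterp
  refine le_trans ?_ hinterp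
  gcongr
  simpa only [abs_pow] using abs_integral_le_integral_abs (f := fun x : ℝ ↦ x ^ c) (μ := μ)

theorem prod_integral_pow_le {μ : Measure ℝ} [IsProbabilityMeasure μ] {ι : Type*} [Fintype ι]
    {q : ℕ} (hq : 1 < q) (hμ : Integrable (fun x ↦ x ^ (2 * q)) μ) (hmean : ∫ x, x ∂μ = 0)
    (c : ι → ℕ) (hc : ∑ i, c i = 2 * q) {m : ℝ} (hm : 0 < m) :
    ∏ i, ∫ x, x ^ c i ∂μ ≤ (m ^ q * (∫ x, x ^ 2 ∂μ) ^ q + m * ∫ x, x ^ (2 * q) ∂μ) *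
      if #{i | c i ≠ 0} ≤ q then (m ^ #{i | c i ≠ 0})⁻¹ else 0 := by
  have hmoment2 : 0 ≤ ∫ x, x ^ 2 ∂μ := by positivity
  have hmoment2q : 0 ≤ ∫ x, x ^ (2 * q) ∂μ := integral_nonneg fun x ↦ (even_two_mul q).pow_nonneg x
  by_cases h1 : ∃ i, c i = 1
  · obtain ⟨i, hi⟩ := h1
    rw [prod_eq_zero (mem_univ i) (by simpa [hi] using hmean)]
    split_ifs <;> positivity
  push Not at h1
  set s : Finset ι := {i | c i ≠ 0}
  have hc2 : ∀ i ∈ s, 2 ≤ c i := fun i hi ↦ by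
    have := (mem_filter.mp hi).2; have := h1 i; omega
  have hsum : ∑ i ∈ s, c i = 2 * q := by rw [sum_filter_ne_zero, hc]
  have hs : #s ≤ q := by
    have := card_nsmul_le_sum s c 2 hc2
    rw [hsum, smul_eq_mul] at this; omega
  have habs : |∏ i, ∫ x, x ^ c i ∂μ| = ∏ i ∈ s, |∫ x, x ^ c i ∂μ| := by
    rw [abs_prod, prod_filter_of_ne]
    intro i _ h
    contrapose! h
    simp [h]
  rw [if_pos hs, ← div_eq_mul_inv, le_div_iff₀ (by positivity), mul_comm]
  calc m ^ #s * ∏ i, ∫ x, x ^ c i ∂μ ≤ m ^ #s * |∏ i, ∫ x, x ^ c i ∂μ| := by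
        gcongr; exact le_abs_self _
    _ = m ^ #s * ∏ i ∈ s, |∫ x, x ^ c i ∂μ| := by rw [habs]
    _ ≤ _ := pow_card_mul_prod_le_add s c _ hq hc2 hsum hm.le hmoment2 hmoment2q
        (fun i _ ↦ abs_nonneg _) fun i hi ↦ abs_integral_pow_pow_le_pow_mul_pow (even_two_mul q) hμ
          (hc2 i hi) (hsum ▸ single_le_sum (by simp) hi)

theorem Fintype.prod_comp_eq_prod_pow_card_fiber {κ ι M : Type*} [Fintype κ] [Fintype ι]
    [DecidableEq ι] [CommMonoid M] (f : ι → M) (g : κ → ι) :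
    ∏ t, f (g t) = ∏ i, f i ^ #{t | g t = i} := by
  rw [prod_comp]
  refine Finset.prod_subset (subset_univ _) fun i _ hi ↦ ?_
  simp_all

theorem ProbabilityTheory.iIndepFun.integrable_prod {Ω ι : Type*} [MeasurableSpace Ω]
    {P : Measure Ω} {Z : ι → Ω → ℝ} (hZ : iIndepFun Z P) (hZm : ∀ i, Measurable (Z i))
    (hZi : ∀ i, Integrable (Z i) P) (s : Finset ι) : Integrable (fun ω ↦ ∏ i ∈ s, Z i ω) P := by
  refine ⟨s.aestronglyMeasurable_fun_prod fun i _ ↦ (hZm i).aestronglyMeasurable, ?_⟩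
  have henorm : ∀ ω, ‖∏ i ∈ s, Z i ω‖ₑ = ∏ i ∈ s, ‖Z i ω‖ₑ := fun ω ↦ by
    simp [enorm_eq_nnnorm, nnnorm_prod]
  simp only [HasFiniteIntegral, henorm]
  rw [lintegral_prod_eq_prod_lintegral_of_indepFun s (fun i ω ↦ ‖Z i ω‖ₑ)
    (hZ.comp (fun _ x ↦ ‖x‖ₑ) fun _ ↦ measurable_enorm) fun i ↦ (hZm i).enorm]
  exact ENNReal.prod_lt_top fun i _ ↦ (hZi i).2

theorem integral_sum_pow_eq_sum_prod {Ω ι : Type*} [MeasurableSpace Ω] {P : Measure Ω}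
    [Fintype ι] [DecidableEq ι] {Y : ι → Ω → ℝ} {F : Measure ℝ} {n : ℕ}
    (hY : ∀ i, Measurable (Y i)) (hind : iIndepFun Y P) (hmap : ∀ i, P.map (Y i) = F)
    (hF : ∀ c ≤ n, Integrable (fun x ↦ x ^ c) F) :
    ∫ ω, (∑ i, Y i ω) ^ n ∂P = ∑ g : Fin n → ι, ∏ i, ∫ x, x ^ #{t | g t = i} ∂F := by
  have hmoment : ∀ i c, ∫ ω, Y i ω ^ c ∂P = ∫ x, x ^ c ∂F := fun i c ↦ by
    rw [← hmap i, integral_map (hY i).aemeasurable (by fun_prop)]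
  have hint : ∀ i, ∀ c ≤ n, Integrable (fun ω ↦ Y i ω ^ c) P := fun i c hc ↦
    (integrable_map_measure (g := (· ^ c)) (by fun_prop) (hY i).aemeasurable).mp (hmap i ▸ hF c hc)
  have hfiber : ∀ ω (g : Fin n → ι), ∏ t, Y (g t) ω = ∏ i, Y i ω ^ #{t | g t = i} :=
    fun ω g ↦ Fintype.prod_comp_eq_prod_pow_card_fiber (Y · ω) g
  simp only [sum_pow', Fintype.piFinset_univ, hfiber]
  have hprod : ∀ g : Fin n → ι, Integrable (fun ω ↦ ∏ i, Y i ω ^ #{t | g t = i}) P := fun g ↦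
    (hind.comp _ fun i ↦ measurable_id.pow_const _).integrable_prod (fun i ↦ (hY i).pow_const _)
      (fun i ↦ hint i _ ((card_filter_le _ _).trans_eq (Finset.card_fin n))) univ
  rw [integral_finsetSum _ fun g _ ↦ hprod g]
  refine Finset.sum_congr rfl fun g _ ↦ ?_
  rw [hind.integral_fun_prod_comp (f := fun i x ↦ x ^ #{t | g t = i}) (fun i ↦ (hY i).aemeasurable)
    (fun i ↦ by fun_prop)]
  simp only [hmoment]

section

open Fintype (card)

variable {κ ι : Type*} [Fintype κ] [DecidableEq κ] [Fintype ι] [DecidableEq ι]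

theorem card_filter_card_image_eq_le (k : ℕ) :
    #{g : κ → ι | #(univ.image g) = k} ≤ (card ι).choose k * k ^ card κ := by
  calc #{g : κ → ι | #(univ.image g) = k}
      ≤ #((powersetCard k univ).biUnion fun s ↦ Fintype.piFinset fun _ : κ ↦ s) := by
        refine card_le_card fun g hg ↦ mem_biUnion.mpr ⟨univ.image g, ?_, ?_⟩
        · simpa using hg
        · simp [Fintype.mem_piFinset]
    _ ≤ ∑ s ∈ powersetCard k (univ : Finset ι), #(Fintype.piFinset fun _ : κ ↦ s) :=
        card_biUnion_le
    _ = (card ι).choose k * k ^ card κ := by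
        rw [Finset.sum_congr rfl fun s hs ↦ by
          rw [Fintype.card_piFinset, prod_const, (mem_powersetCard.mp hs).2]]
        simp

theorem sum_ite_inv_pow_card_image_le (q : ℕ) :
    ∑ g : κ → ι, (if #(univ.image g) ≤ q then ((card ι : ℝ) ^ #(univ.image g))⁻¹ else 0) ≤
      (q + 1) * q ^ card κ := by
  rw [← sum_filter,
    ← sum_fiberwise_of_maps_to (t := range (q + 1)) (g := fun g : κ → ι ↦ #(univ.image g))
    (fun g hg ↦ by simpa [Nat.lt_succ_iff] using hg)]
  calc ∑ k ∈ range (q + 1), ∑ g ∈ {g : κ → ι | #(univ.image g) ≤ q} with #(univ.image g) = k,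
        ((card ι : ℝ) ^ #(univ.image g))⁻¹
      ≤ ∑ k ∈ range (q + 1), ((card ι).choose k * k ^ card κ : ℕ) * ((card ι : ℝ) ^ k)⁻¹ := by
        gcongr with k hk
        rw [Finset.sum_congr rfl fun g hg ↦ by rw [(mem_filter.mp hg).2], sum_const, nsmul_eq_mul]
        gcongr
        exact (card_le_card (filter_subset_filter _ (filter_subset _ _))).trans
          (card_filter_card_image_eq_le k)
    _ ≤ ∑ _k ∈ range (q + 1), (q : ℝ) ^ card κ := by
        gcongr with k hk
        have hkq : k ≤ q := Nat.lt_succ_iff.mp (mem_range.mp hk)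
        rw [Nat.cast_mul, mul_right_comm, ← div_eq_mul_inv, ← one_mul ((q : ℝ) ^ card κ)]
        push_cast
        gcongr
        exact div_le_one_of_le₀ (mod_cast Nat.choose_le_pow _ _) (by positivity)
    _ = (q + 1) * q ^ card κ := by simp

end

theorem filter_card_fiber_ne_zero_eq_image {κ ι : Type*} [Fintype κ] [Fintype ι] [DecidableEq ι]
    (g : κ → ι) : ({i | #{t | g t = i} ≠ 0} : Finset ι) = univ.image g := by
  ext i
  simp

/-- **Moment bound for sums of i.i.d. centered random variables** (Lemma 6.1).
For every integer `q > 1` there are constants `A_q, B_q` depending only on `q` such that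
for any i.i.d. mean-zero `Y_1, …, Y_m` with `E[Y^{2q}] < ∞`,
`E[S_m^{2q}] ≤ A_q m^q (E[Y²])^q + B_q m E[Y^{2q}]`. -/
theorem stmt17 (q : ℕ) (hq : 1 < q) :
    ∃ A B : ℝ, ∀ (Ω : Type) (_ : MeasurableSpace Ω) (P : Measure Ω)
      (_ : IsProbabilityMeasure P) (m : ℕ) (Y : Fin m → Ω → ℝ)
      (F : Measure ℝ),
      (∀ i, Measurable (Y i)) →
      iIndepFun Y P →
      (∀ i, Measure.map (Y i) P = F) →
      (∫ x, x ∂F) = 0 →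
      Integrable (fun x : ℝ => x ^ (2 * q)) F →
      ∫ ω, (∑ i, Y i ω) ^ (2 * q) ∂P ≤
        A * (m : ℝ) ^ q * (∫ x, x ^ 2 ∂F) ^ q + B * (m : ℝ) * ∫ x, x ^ (2 * q) ∂F := by
  refine ⟨(q + 1) * q ^ (2 * q), (q + 1) * q ^ (2 * q), ?_⟩
  intro Ω _ P _ m Y F hY hind hmap hmean hF
  rcases Nat.eq_zero_or_pos m with rfl | hm
  · simp [zero_pow (by omega : 2 * q ≠ 0), zero_pow (by omega : q ≠ 0)]
  have : IsProbabilityMeasure F :=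
    hmap ⟨0, hm⟩ ▸ Measure.isProbabilityMeasure_map (hY _).aemeasurable
  set C := (m : ℝ) ^ q * (∫ x, x ^ 2 ∂F) ^ q + m * ∫ x, x ^ (2 * q) ∂F
  have hC : 0 ≤ C := by
    have : 0 ≤ ∫ x, x ^ (2 * q) ∂F := integral_nonneg fun x ↦ (even_two_mul q).pow_nonneg x
    positivity
  calc ∫ ω, (∑ i, Y i ω) ^ (2 * q) ∂P
      = ∑ g : Fin (2 * q) → Fin m, ∏ i, ∫ x, x ^ #{t | g t = i} ∂F :=
        integral_sum_pow_eq_sum_prod hY hind hmap fun c hc ↦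
          integrable_pow_of_le (even_two_mul q) hc hF
    _ ≤ ∑ g : Fin (2 * q) → Fin m,
          C * if #(univ.image g) ≤ q then ((m : ℝ) ^ #(univ.image g))⁻¹ else 0 := by
        gcongr with g
        rw [← filter_card_fiber_ne_zero_eq_image]
        exact prod_integral_pow_le hq hF hmean _
          ((card_eq_sum_card_fiberwise fun _ _ ↦ mem_univ _).symm.trans (card_fin _))
          (by positivity)
    _ ≤ C * ((q + 1) * q ^ (2 * q)) := by
        rw [← mul_sum]
        refine mul_le_mul_of_nonneg_left ?_ hC
        simpa using sum_ite_inv_pow_card_image_le (κ := Fin (2 * q)) (ι := Fin m) q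
    _ = _ := by ring
end

section
/- Let q > 1 be an integer, θ ≥ 1 a real number, t ≥ 2 an integer, and set r = 1 − 1/(2q) and β_0 = 1. If real numbers β_1, …, β_t satisfy the system of linear equations (1 − 2(β_i − β_{i+1}) − (1 − β_i)/q)/(2 + θ) = ((q−1)/q) · (1 − β_t)/θ for all i = 0, 1, …, t−1, then β_i = 1 − qθ(1 − r^i)/( θ + (q−1)(2+θ)(1 − r^t) ) for all i = 1, …, t. -/
/-!
With `x i = 1 - β i` the system is the affine recurrence `x (i + 1) = r * x i + b` with `x 0 = 0`,
where `b` depends only on `β t`; hence `x i = A * (1 - r ^ i)` with `A = b / (1 - r)`.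
Evaluating at `i = t` turns the dependence of `A` on `β t` into a linear equation for `A`,
whose solution is `A = qθ / (θ + (q - 1)(2 + θ)(1 - r ^ t))`.
-/

theorem mul_one_sub_eq_of_affine_rec {R : Type*} [CommRing R] {r b : R} {t : ℕ} {x : ℕ → R}
    (h0 : x 0 = 0) (hstep : ∀ n < t, x (n + 1) = r * x n + b) :
    ∀ n ≤ t, x n * (1 - r) = b * (1 - r ^ n) := by
  intro n hn
  induction n with
  | zero => simp [h0]
  | succ n ih =>
    rw [hstep n hn, pow_succ]
    linear_combination r * ih (by omega)

theorem one_sub_eq_of_renormalization_system {Q θ c : ℝ} (hQ : Q ≠ 0)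
    {t : ℕ} {β : ℕ → ℝ} (hβ0 : β 0 = 1)
    (hsys : ∀ i < t, 1 - 2 * (β i - β (i + 1)) - (1 - β i) / Q = (2 + θ) * c) :
    ∀ i ≤ t, 1 - β i = Q * (1 - (2 + θ) * c) * (1 - (1 - 1 / (2 * Q)) ^ i) := by
  set r := 1 - 1 / (2 * Q)
  have hr : (1 - r) * (2 * Q) = 1 := by simp only [r]; field_simp; ring
  have hstep : ∀ i < t, 1 - β (i + 1) = r * (1 - β i) + (1 - (2 + θ) * c) / 2 := by
    intro i hi
    linear_combination (-1 / 2 : ℝ) * hsys i hi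
  intro i hi
  have h := mul_one_sub_eq_of_affine_rec (x := fun i ↦ 1 - β i) (by simp [hβ0]) hstep i hi
  linear_combination 2 * Q * h - (1 - β i) * hr

theorem stmt18_general (q : ℕ) (hq : 1 < q) (θ : ℝ) (hθ : 1 ≤ θ) (t : ℕ)
    (β : ℕ → ℝ) (hβ0 : β 0 = 1)
    (hsys : ∀ i < t,
      (1 - 2 * (β i - β (i + 1)) - (1 - β i) / (q : ℝ)) / (2 + θ) =
        ((q : ℝ) - 1) / (q : ℝ) * ((1 - β t) / θ)) :
    ∀ i, 1 ≤ i → i ≤ t →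
      β i = 1 - (q : ℝ) * θ * (1 - (1 - 1 / (2 * (q : ℝ))) ^ i) /
        (θ + ((q : ℝ) - 1) * (2 + θ) * (1 - (1 - 1 / (2 * (q : ℝ))) ^ t)) := by
  intro i _ hi
  have hq1 : (1 : ℝ) ≤ q := by exact_mod_cast hq.le
  set r : ℝ := 1 - 1 / (2 * (q : ℝ))
  set D := θ + ((q : ℝ) - 1) * (2 + θ) * (1 - r ^ t)
  have hD : 0 < D := by
    have : r ^ t ≤ 1 := pow_le_one₀ (by simp only [r]; bound) (by simp only [r]; bound)
    positivity
  have key := one_sub_eq_of_renormalization_system (by positivity) hβ0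
    fun i hi ↦ (div_eq_iff (by positivity)).mp (hsys i hi) |>.trans (mul_comm _ _)
  set A := (q : ℝ) * (1 - (2 + θ) * ((q - 1) / q * ((1 - β t) / θ)))
  have hAθ : A * θ = q * θ - (2 + θ) * (q - 1) * (1 - β t) := by
    simp only [A]; field_simp
  have hA : A = q * θ / D := by
    rw [eq_div_iff hD.ne']
    linear_combination hAθ - (2 + θ) * (q - 1) * key t le_rfl
  linear_combination -key i hi - (1 - r ^ i) * hA

/-- **Solution of the renormalization system** (Lemma 6.3). If `β_0 = 1` and
`β_1, …, β_t` solve the linear system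
`(1 - 2(β_i - β_{i+1}) - (1-β_i)/q)/(2+θ) = ((q-1)/q)·(1-β_t)/θ` for `i = 0, …, t-1`,
then `β_i = 1 - qθ(1-r^i)/(θ + (q-1)(2+θ)(1-r^t))` where `r = 1 - 1/(2q)`. -/
theorem stmt18 (q : ℕ) (hq : 1 < q) (θ : ℝ) (hθ : 1 ≤ θ) (t : ℕ) (ht : 2 ≤ t)
    (β : ℕ → ℝ) (hβ0 : β 0 = 1)
    (hsys : ∀ i < t,
      (1 - 2 * (β i - β (i + 1)) - (1 - β i) / (q : ℝ)) / (2 + θ) =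
        ((q : ℝ) - 1) / (q : ℝ) * ((1 - β t) / θ)) :
    ∀ i, 1 ≤ i → i ≤ t →
      β i = 1 - (q : ℝ) * θ * (1 - (1 - 1 / (2 * (q : ℝ))) ^ i) /
        (θ + ((q : ℝ) - 1) * (2 + θ) * (1 - (1 - 1 / (2 * (q : ℝ))) ^ t)) :=
  stmt18_general q hq θ hθ t β hβ0 hsys
end
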